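/- arXiv:2010.03473 — 2 statements merged into one kernel-verified Lean document; each statement's English description precedes it below -/
import Mathlib

section
/- Let B̂_j ∈ L²_{s_B}(ℝ²) for s_B ≥ 3 − 1/(1−r), 0 < r ≤ 1/2, with support in B_{ε^{r−1}}(0), and let ω_R : ℝ² → ℝ satisfy |ω_R(k)| ≤ C|k − k₀|³. Then ‖ε^{−1} ω_R(k₀ + ε ·) B̂_j‖_{L²(B_{ε^{r−1}}(0))} ≤ c ε^{2 − max{0,(1−r)(3−s_B)}} ‖B̂_j‖_{L²_{s_B}} ≤ c ε ‖B̂_j‖_{L²_{s_B}}. -/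
open MeasureTheory

lemma omegaR_aux (sB x R : ℝ) (hx : 0 ≤ x) (hR : 1 ≤ R) (hxR : x ≤ R) :
    x ^ 3 ≤ 2 ^ (max 0 (3 - sB)) * R ^ (max 0 (3 - sB)) * (1 + x) ^ sB := by
  have hpos : (0:ℝ) < 1 + x := by linarith
  have h1 : x ^ 3 ≤ (1 + x) ^ (3:ℕ) := pow_le_pow_left₀ hx (by linarith) 3
  have h2 : ((1 + x):ℝ) ^ (3:ℕ) = (1 + x) ^ ((3:ℝ) - sB) * (1 + x) ^ sB := by
    rw [← Real.rpow_natCast (1 + x) 3, ← Real.rpow_add hpos]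
    norm_num
  have h3 : (1 + x) ^ ((3:ℝ) - sB) ≤ 2 ^ (max 0 (3 - sB)) * R ^ (max 0 (3 - sB)) := by
    rcases le_or_gt (3 - sB) 0 with h | h
    · calc (1 + x) ^ ((3:ℝ) - sB) ≤ 1 :=
            Real.rpow_le_one_of_one_le_of_nonpos (by linarith) h
        _ ≤ 2 ^ (max 0 (3 - sB)) * R ^ (max 0 (3 - sB)) := by
            have h4 : (1:ℝ) ≤ 2 ^ (max 0 (3 - sB)) :=
              Real.one_le_rpow one_le_two (le_max_left _ _)
            have h5 : (1:ℝ) ≤ R ^ (max 0 (3 - sB)) :=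
              Real.one_le_rpow hR (le_max_left _ _)
            nlinarith
    · have hm : max 0 (3 - sB) = 3 - sB := max_eq_right h.le
      rw [hm]
      calc (1 + x) ^ ((3:ℝ) - sB) ≤ (2 * R) ^ ((3:ℝ) - sB) :=
            Real.rpow_le_rpow hpos.le (by linarith) h.le
        _ = 2 ^ ((3:ℝ) - sB) * R ^ ((3:ℝ) - sB) :=
            Real.mul_rpow (by norm_num) (by linarith)
  calc x ^ 3 ≤ (1 + x) ^ ((3:ℝ) - sB) * (1 + x) ^ sB := by rw [← h2]; exact h1
    _ ≤ 2 ^ (max 0 (3 - sB)) * R ^ (max 0 (3 - sB)) * (1 + x) ^ sB :=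
        mul_le_mul_of_nonneg_right h3 (Real.rpow_nonneg hpos.le _)

/-- The `ω_R`-remainder estimate: for `B̂_j ∈ L²_{s_B}(ℝ²)` supported in `B_{ε^{r−1}}(0)`,
`s_B ≥ 3 − 1/(1−r)`, `0 < r ≤ 1/2`, and `|ω_R(k)| ≤ C|k−k₀|³`,
`‖ε⁻¹ ω_R(k₀+ε·) B̂_j‖_{L²} ≤ c ε^{2−max{0,(1−r)(3−s_B)}} ‖B̂_j‖_{L²_{s_B}} ≤ c ε ‖B̂_j‖_{L²_{s_B}}`. -/
theorem omegaR_remainder_estimate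
    (sB r : ℝ) (hr0 : 0 < r) (hr : r ≤ 1 / 2) (hsB : 3 - 1 / (1 - r) ≤ sB)
    (C : ℝ) (hC : 0 < C) :
    ∃ c > 0, ∀ (ε : ℝ), 0 < ε → ε < 1 →
      ∀ (Bj : EuclideanSpace ℝ (Fin 2) → ℂ) (ωR : EuclideanSpace ℝ (Fin 2) → ℝ)
        (k₀ : EuclideanSpace ℝ (Fin 2)),
      AEStronglyMeasurable Bj volume →
      Integrable (fun k => (1 + ‖k‖) ^ (2 * sB) * ‖Bj k‖ ^ 2) volume →
      Function.support Bj ⊆ Metric.ball 0 (ε ^ (r - 1)) →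
      (∀ k, |ωR k| ≤ C * ‖k - k₀‖ ^ 3) →
      Real.sqrt (∫ k in Metric.ball (0 : EuclideanSpace ℝ (Fin 2)) (ε ^ (r - 1)),
          ‖ε⁻¹ * ωR (k₀ + ε • k) * Bj k‖ ^ 2) ≤
        c * ε ^ (2 - max 0 ((1 - r) * (3 - sB))) *
          Real.sqrt (∫ k, (1 + ‖k‖) ^ (2 * sB) * ‖Bj k‖ ^ 2) ∧
      c * ε ^ (2 - max 0 ((1 - r) * (3 - sB))) *
          Real.sqrt (∫ k, (1 + ‖k‖) ^ (2 * sB) * ‖Bj k‖ ^ 2) ≤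
        c * ε * Real.sqrt (∫ k, (1 + ‖k‖) ^ (2 * sB) * ‖Bj k‖ ^ 2) := by
  have h1r : (0:ℝ) < 1 - r := by linarith
  set m₀ : ℝ := max 0 (3 - sB) with hm₀
  set M : ℝ := max 0 ((1 - r) * (3 - sB)) with hMdef
  have hm₀0 : 0 ≤ m₀ := le_max_left _ _
  have hc : (0:ℝ) < C * 2 ^ m₀ := by positivity
  refine ⟨C * 2 ^ m₀, hc, ?_⟩
  intro ε hε hε1 Bj ωR k₀ hmeas hint hsupp hωR
  -- basic facts
  have hM0 : 0 ≤ M := le_max_left _ _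
  have hM1 : M ≤ 1 := by
    refine max_le (by norm_num) ?_
    have h2 : 3 - sB ≤ 1 / (1 - r) := by linarith
    have h3 : (1 - r) * (3 - sB) ≤ (1 - r) * (1 / (1 - r)) :=
      mul_le_mul_of_nonneg_left h2 h1r.le
    have h4 : (1 - r) * (1 / (1 - r)) = 1 := by field_simp
    linarith
  have hS0 : (0:ℝ) ≤ Real.sqrt (∫ k, (1 + ‖k‖) ^ (2 * sB) * ‖Bj k‖ ^ 2) :=
    Real.sqrt_nonneg _
  have hεM : ε ^ ((2:ℝ) - M) ≤ ε := by
    calc ε ^ ((2:ℝ) - M) ≤ ε ^ (1:ℝ) :=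
          Real.rpow_le_rpow_of_exponent_ge hε hε1.le (by linarith)
      _ = ε := Real.rpow_one ε
  constructor
  · -- main estimate
    set R : ℝ := ε ^ (r - 1) with hRdef
    have hR1 : (1:ℝ) ≤ R := by
      calc (1:ℝ) = ε ^ (0:ℝ) := (Real.rpow_zero ε).symm
        _ ≤ ε ^ (r - 1) := Real.rpow_le_rpow_of_exponent_ge hε hε1.le (by linarith)
    have hRm : R ^ m₀ = ε ^ (-M) := by
      have e1 : (1 - r) * m₀ = M := by
        rw [hm₀, hMdef, mul_max_of_nonneg _ _ h1r.le, mul_zero]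
      have e2 : (r - 1) * m₀ = -((1 - r) * m₀) := by ring
      rw [hRdef, ← Real.rpow_mul hε.le, e2, e1]
    -- pointwise bound on the norm
    have hbound : ∀ k : EuclideanSpace ℝ (Fin 2), ‖k‖ < R →
        ‖(ε⁻¹ * ωR (k₀ + ε • k) * Bj k : ℂ)‖ ≤
          C * 2 ^ m₀ * ε ^ ((2:ℝ) - M) * ((1 + ‖k‖) ^ sB * ‖Bj k‖) := by
      intro k hk
      have hnk0 : (0:ℝ) ≤ ‖k‖ := norm_nonneg k
      have hx : ‖k‖ ^ 3 ≤ 2 ^ m₀ * ε ^ (-M) * (1 + ‖k‖) ^ sB := by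
        have h := omegaR_aux sB ‖k‖ R hnk0 hR1 hk.le
        rw [← hm₀, hRm] at h
        exact h
      have hω : |ωR (k₀ + ε • k)| ≤ C * (ε * ‖k‖) ^ 3 := by
        have h := hωR (k₀ + ε • k)
        rwa [add_sub_cancel_left, norm_smul, Real.norm_eq_abs, abs_of_pos hε] at h
      have hnorm : ‖(ε⁻¹ * ωR (k₀ + ε • k) * Bj k : ℂ)‖
          = ε⁻¹ * |ωR (k₀ + ε • k)| * ‖Bj k‖ := by
        simp only [norm_mul, Complex.norm_real, Real.norm_eq_abs]
        rw [abs_of_pos (inv_pos.mpr hε)]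
      rw [hnorm]
      calc ε⁻¹ * |ωR (k₀ + ε • k)| * ‖Bj k‖
          ≤ ε⁻¹ * (C * (ε * ‖k‖) ^ 3) * ‖Bj k‖ := by
            apply mul_le_mul_of_nonneg_right _ (norm_nonneg _)
            exact mul_le_mul_of_nonneg_left hω (inv_pos.mpr hε).le
        _ = C * ε ^ (2:ℕ) * (‖k‖ ^ 3 * ‖Bj k‖) := by
            have hε3 : ε⁻¹ * ε ^ (3:ℕ) = ε ^ (2:ℕ) := by
              rw [pow_succ', ← mul_assoc, inv_mul_cancel₀ hε.ne', one_mul]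
            calc ε⁻¹ * (C * (ε * ‖k‖) ^ 3) * ‖Bj k‖
                = C * (ε⁻¹ * ε ^ (3:ℕ)) * (‖k‖ ^ 3 * ‖Bj k‖) := by ring
              _ = C * ε ^ (2:ℕ) * (‖k‖ ^ 3 * ‖Bj k‖) := by rw [hε3]
        _ ≤ C * ε ^ (2:ℕ) * ((2 ^ m₀ * ε ^ (-M) * (1 + ‖k‖) ^ sB) * ‖Bj k‖) := by
            apply mul_le_mul_of_nonneg_left _ (by positivity)
            exact mul_le_mul_of_nonneg_right hx (norm_nonneg _)
        _ = C * 2 ^ m₀ * (ε ^ (2:ℕ) * ε ^ (-M)) * ((1 + ‖k‖) ^ sB * ‖Bj k‖) := by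
            ring
        _ = C * 2 ^ m₀ * ε ^ ((2:ℝ) - M) * ((1 + ‖k‖) ^ sB * ‖Bj k‖) := by
            have hεe : ε ^ (2:ℕ) * ε ^ (-M) = ε ^ ((2:ℝ) - M) := by
              rw [← Real.rpow_natCast ε 2, ← Real.rpow_add hε]
              congr 1
            rw [hεe]
    -- squared pointwise bound
    have hbound2 : ∀ k ∈ Metric.ball (0 : EuclideanSpace ℝ (Fin 2)) R,
        ‖(ε⁻¹ * ωR (k₀ + ε • k) * Bj k : ℂ)‖ ^ 2 ≤
          (C * 2 ^ m₀ * ε ^ ((2:ℝ) - M)) ^ 2 *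
            ((1 + ‖k‖) ^ (2 * sB) * ‖Bj k‖ ^ 2) := by
      intro k hk
      rw [mem_ball_zero_iff] at hk
      have h := pow_le_pow_left₀ (norm_nonneg _) (hbound k hk) 2
      refine h.trans_eq ?_
      have hsq : ((1 + ‖k‖) ^ sB) ^ (2:ℕ) = (1 + ‖k‖) ^ (2 * sB) := by
        rw [← Real.rpow_natCast ((1 + ‖k‖) ^ sB) 2, ← Real.rpow_mul (by positivity)]
        norm_num [mul_comm]
      rw [mul_pow (C * 2 ^ m₀ * ε ^ ((2:ℝ) - M)), mul_pow ((1 + ‖k‖) ^ sB), hsq]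
    -- integral estimate
    by_cases hI : IntegrableOn
        (fun k => ‖(ε⁻¹ * ωR (k₀ + ε • k) * Bj k : ℂ)‖ ^ 2)
        (Metric.ball (0 : EuclideanSpace ℝ (Fin 2)) R) volume
    · have hIg : IntegrableOn
          (fun k => (C * 2 ^ m₀ * ε ^ ((2:ℝ) - M)) ^ 2 *
            ((1 + ‖k‖) ^ (2 * sB) * ‖Bj k‖ ^ 2))
          (Metric.ball (0 : EuclideanSpace ℝ (Fin 2)) R) volume :=
        (hint.const_mul _).integrableOn
      have step1 := setIntegral_mono_on hI hIg measurableSet_ball hbound2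
      have step2 : ∫ k in Metric.ball (0 : EuclideanSpace ℝ (Fin 2)) R,
            (C * 2 ^ m₀ * ε ^ ((2:ℝ) - M)) ^ 2 *
              ((1 + ‖k‖) ^ (2 * sB) * ‖Bj k‖ ^ 2)
          = (C * 2 ^ m₀ * ε ^ ((2:ℝ) - M)) ^ 2 *
              ∫ k in Metric.ball (0 : EuclideanSpace ℝ (Fin 2)) R,
                (1 + ‖k‖) ^ (2 * sB) * ‖Bj k‖ ^ 2 :=
        integral_const_mul _ _
      have step3 : (∫ k in Metric.ball (0 : EuclideanSpace ℝ (Fin 2)) R,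
            (1 + ‖k‖) ^ (2 * sB) * ‖Bj k‖ ^ 2)
          ≤ ∫ k, (1 + ‖k‖) ^ (2 * sB) * ‖Bj k‖ ^ 2 :=
        setIntegral_le_integral hint (ae_of_all _ fun k => by positivity)
      have hK0 : (0:ℝ) ≤ (C * 2 ^ m₀ * ε ^ ((2:ℝ) - M)) ^ 2 := sq_nonneg _
      have total : (∫ k in Metric.ball (0 : EuclideanSpace ℝ (Fin 2)) R,
            ‖(ε⁻¹ * ωR (k₀ + ε • k) * Bj k : ℂ)‖ ^ 2)
          ≤ (C * 2 ^ m₀ * ε ^ ((2:ℝ) - M)) ^ 2 *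
              ∫ k, (1 + ‖k‖) ^ (2 * sB) * ‖Bj k‖ ^ 2 := by
        calc _ ≤ _ := step1
          _ = _ := step2
          _ ≤ _ := mul_le_mul_of_nonneg_left step3 hK0
      calc Real.sqrt (∫ k in Metric.ball (0 : EuclideanSpace ℝ (Fin 2)) R,
            ‖(ε⁻¹ * ωR (k₀ + ε • k) * Bj k : ℂ)‖ ^ 2)
          ≤ Real.sqrt ((C * 2 ^ m₀ * ε ^ ((2:ℝ) - M)) ^ 2 *
              ∫ k, (1 + ‖k‖) ^ (2 * sB) * ‖Bj k‖ ^ 2) := Real.sqrt_le_sqrt total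
        _ = C * 2 ^ m₀ * ε ^ ((2:ℝ) - M) *
              Real.sqrt (∫ k, (1 + ‖k‖) ^ (2 * sB) * ‖Bj k‖ ^ 2) := by
            rw [Real.sqrt_mul hK0, Real.sqrt_sq (by positivity)]
    · rw [integral_undef hI, Real.sqrt_zero]
      positivity
  · -- second inequality
    have := mul_le_mul_of_nonneg_left hεM hc.le
    calc C * 2 ^ m₀ * ε ^ ((2:ℝ) - M) * Real.sqrt (∫ k, (1 + ‖k‖) ^ (2 * sB) * ‖Bj k‖ ^ 2)
        ≤ C * 2 ^ m₀ * ε * Real.sqrt (∫ k, (1 + ‖k‖) ^ (2 * sB) * ‖Bj k‖ ^ 2) := by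
          apply mul_le_mul_of_nonneg_right _ hS0
          exact mul_le_mul_of_nonneg_left hεM hc.le
      _ = _ := rfl
end

section
/- Let ℬ : (ℝ²)⁴ → ℂ be Lipschitz continuous with constant C, and let B̂_α, B̂_β, B̂_γ ∈ L²_s(ℝ²), s > 1. Define W₂(k') := ∫∫ B̂_α(k'−l) B̂_β(l−t) conj(B̂_γ)(t) [ℬ(a+εk', b+ε(k'−l), c+ε(l−t), d+εt) − ℬ(a,b,c,d)] dt dl for fixed a,b,c,d ∈ ℝ². Then ‖W₂‖_{L²(ℝ²)} ≤ c ε ‖B̂_α‖_{L²_s} ‖B̂_β‖_{L²_s} ‖B̂_γ‖_{L²_s}. -/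
open MeasureTheory
open scoped ENNReal
open scoped NNReal

namespace W2Aux

noncomputable section

abbrev E2 : Type := EuclideanSpace ℝ (Fin 2)

lemma sq_half (x : ℝ≥0∞) : (x ^ (2⁻¹ : ℝ)) ^ 2 = x := by
  rw [← ENNReal.rpow_natCast (x ^ (2⁻¹ : ℝ)) 2, ← ENNReal.rpow_mul]
  norm_num

lemma half_mul_self (x : ℝ≥0∞) : x ^ (2⁻¹ : ℝ) * x ^ (2⁻¹ : ℝ) = x := by
  rw [← sq, sq_half]

lemma rpow_two_eq_sq (x : ℝ≥0∞) : x ^ (2 : ℝ) = x ^ 2 := by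
  rw [show (2:ℝ) = ((2:ℕ) : ℝ) by norm_num, ENNReal.rpow_natCast]

lemma conj22 : Real.HolderConjugate 2 2 := Real.HolderConjugate.two_two

/-- Cauchy–Schwarz for lintegrals. -/
lemma lintegral_cs {α : Type*} [MeasurableSpace α] {μ : Measure α} {f g : α → ℝ≥0∞}
    (hf : AEMeasurable f μ) (hg : AEMeasurable g μ) :
    ∫⁻ k, f k * g k ∂μ ≤
      (∫⁻ k, f k ^ 2 ∂μ) ^ (2⁻¹ : ℝ) * (∫⁻ k, g k ^ 2 ∂μ) ^ (2⁻¹ : ℝ) := by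
  have h := ENNReal.lintegral_mul_le_Lp_mul_Lq μ conj22 hf hg
  simp only [Pi.mul_apply, rpow_two_eq_sq, one_div] at h ⊢
  simpa [rpow_two_eq_sq] using h

lemma lintegral_sub_left_invariance (f : E2 → ℝ≥0∞) (k : E2) :
    ∫⁻ l, f (k - l) = ∫⁻ l, f l := by
  have hm : Measure.map (⇑(MeasurableEquiv.subLeft k)) (volume : Measure E2) = volume := by
    have : ⇑(MeasurableEquiv.subLeft k) = fun t : E2 => k - t := rfl
    rw [this]
    exact Measure.map_sub_left_eq_self (volume : Measure E2) k
  conv_rhs => rw [← hm]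
  rw [lintegral_map_equiv]
  rfl

variable {f g : E2 → ℝ≥0∞}

lemma lconv_measurable (hf : Measurable f) (hg : Measurable g) :
    Measurable fun k : E2 => ∫⁻ l, f (k - l) * g l :=
  Measurable.lintegral_prod_right' ((hf.comp measurable_sub).mul (hg.comp measurable_snd))

lemma lconv_l1 (hf : Measurable f) (hg : Measurable g) :
    ∫⁻ k, ∫⁻ l, f (k - l) * g l = (∫⁻ k, f k) * ∫⁻ k, g k := by
  have hm : Measurable (Function.uncurry fun k l : E2 => f (k - l) * g l) :=
    (hf.comp measurable_sub).mul (hg.comp measurable_snd)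
  rw [lintegral_lintegral_swap hm.aemeasurable]
  have h1 : ∀ l : E2, ∫⁻ k, f (k - l) * g l = (∫⁻ k, f k) * g l := by
    intro l
    have hma : AEMeasurable (fun k : E2 => f (k - l)) (volume : Measure E2) := by
      exact (hf.comp (measurable_id.sub_const l)).aemeasurable
    rw [lintegral_mul_const'' (g l) hma, lintegral_sub_right_eq_self f l]
  rw [lintegral_congr h1, lintegral_const_mul'' _ hg.aemeasurable]

lemma lconv_comm (k : E2) :
    ∫⁻ l, f (k - l) * g l = ∫⁻ l, g (k - l) * f l := by
  have h := lintegral_sub_left_invariance (fun u => g (k - u) * f u) k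
  have h' : ∫⁻ l, g l * f (k - l) = ∫⁻ l, g (k - (k - l)) * f (k - l) :=
    lintegral_congr fun l => by rw [show k - (k - l) = l by abel]
  exact (lintegral_congr fun l => mul_comm _ _).trans (h'.trans h)

lemma lconv_sq_le (hf : Measurable f) (hg : Measurable g) :
    ∫⁻ k, (∫⁻ l, f (k - l) * g l) ^ 2 ≤ (∫⁻ k, f k ^ 2) * (∫⁻ k, g k) ^ 2 := by
  have key : ∀ k : E2, (∫⁻ l, f (k - l) * g l) ^ 2 ≤
      (∫⁻ l, f (k - l) ^ 2 * g l) * ∫⁻ l, g l := by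
    intro k
    have h1 : (∫⁻ l, f (k - l) * g l) =
        ∫⁻ l, (f (k - l) * g l ^ (2⁻¹ : ℝ)) * g l ^ (2⁻¹ : ℝ) :=
      lintegral_congr fun l => by rw [mul_assoc, half_mul_self]
    have hA : AEMeasurable (fun l => f (k - l) * g l ^ (2⁻¹ : ℝ)) (volume : Measure E2) :=
      ((hf.comp (measurable_const.sub measurable_id)).mul (hg.pow_const _)).aemeasurable
    have hB : AEMeasurable (fun l : E2 => g l ^ (2⁻¹ : ℝ)) (volume : Measure E2) :=
      (hg.pow_const _).aemeasurable
    have h2 := lintegral_cs hA hB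
    have h3 : ∀ l : E2, (f (k - l) * g l ^ (2⁻¹ : ℝ)) ^ 2 = f (k - l) ^ 2 * g l := by
      intro l; rw [mul_pow, sq_half]
    have h4 : ∀ l : E2, (g l ^ (2⁻¹ : ℝ)) ^ 2 = g l := fun l => sq_half _
    simp only [h3, h4] at h2
    calc (∫⁻ l, f (k - l) * g l) ^ 2
        = (∫⁻ l, (f (k - l) * g l ^ (2⁻¹ : ℝ)) * g l ^ (2⁻¹ : ℝ)) ^ 2 := by rw [h1]
      _ ≤ ((∫⁻ l, f (k - l) ^ 2 * g l) ^ (2⁻¹ : ℝ) * (∫⁻ l, g l) ^ (2⁻¹ : ℝ)) ^ 2 := by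
          exact pow_le_pow_left' h2 2
      _ = (∫⁻ l, f (k - l) ^ 2 * g l) * ∫⁻ l, g l := by
          rw [mul_pow, sq_half, sq_half]
  calc ∫⁻ k, (∫⁻ l, f (k - l) * g l) ^ 2
      ≤ ∫⁻ k, (∫⁻ l, f (k - l) ^ 2 * g l) * ∫⁻ l, g l := lintegral_mono key
    _ = (∫⁻ k, ∫⁻ l, f (k - l) ^ 2 * g l) * ∫⁻ l, g l :=
        lintegral_mul_const'' _ (lconv_measurable (hf.pow_const 2) hg).aemeasurable
    _ = ((∫⁻ k, f k ^ 2) * (∫⁻ k, g k)) * ∫⁻ k, g k := by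
        rw [lconv_l1 (hf.pow_const 2) hg]
    _ = (∫⁻ k, f k ^ 2) * (∫⁻ k, g k) ^ 2 := by rw [mul_assoc, sq]

lemma lconv_sq_le' (hf : Measurable f) (hg : Measurable g) :
    ∫⁻ k, (∫⁻ l, f (k - l) * g l) ^ 2 ≤ (∫⁻ k, f k) ^ 2 * ∫⁻ k, g k ^ 2 := by
  have h1 : (fun k => (∫⁻ l, f (k - l) * g l) ^ 2) =
      fun k => (∫⁻ l, g (k - l) * f l) ^ 2 := funext fun k => by rw [lconv_comm]
  rw [h1]
  calc ∫⁻ k, (∫⁻ l, g (k - l) * f l) ^ 2 ≤ (∫⁻ k, g k ^ 2) * (∫⁻ k, f k) ^ 2 :=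
      lconv_sq_le hg hf
    _ = (∫⁻ k, f k) ^ 2 * ∫⁻ k, g k ^ 2 := mul_comm _ _


lemma sqrt_integral_le {α : Type*} [MeasurableSpace α] {μ : Measure α} {φ : α → ℝ}
    (hφ : ∀ x, 0 ≤ φ x) {M : ℝ} (hM : 0 ≤ M)
    (h : ∫⁻ x, ENNReal.ofReal (φ x) ∂μ ≤ ENNReal.ofReal (M ^ 2)) :
    Real.sqrt (∫ x, φ x ∂μ) ≤ M := by
  by_cases hm : AEStronglyMeasurable φ μ
  · rw [integral_eq_lintegral_of_nonneg_ae (ae_of_all _ hφ) hm]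
    have h2 : (∫⁻ x, ENNReal.ofReal (φ x) ∂μ).toReal ≤ M ^ 2 := by
      have h3 := ENNReal.toReal_mono ENNReal.ofReal_ne_top h
      calc (∫⁻ x, ENNReal.ofReal (φ x) ∂μ).toReal ≤ (ENNReal.ofReal (M ^ 2)).toReal := h3
        _ = M ^ 2 := ENNReal.toReal_ofReal (by positivity)
    calc Real.sqrt (∫⁻ x, ENNReal.ofReal (φ x) ∂μ).toReal
        ≤ Real.sqrt (M ^ 2) := Real.sqrt_le_sqrt h2
      _ = M := Real.sqrt_sq hM
  · rw [integral_undef (fun hi => hm hi.1)]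
    simpa using hM

lemma sum_sq_le (x y z : ℝ≥0∞) : (x + y + z) ^ 2 ≤ 9 * (x ^ 2 + y ^ 2 + z ^ 2) := by
  have hmono : Monotone (fun a : ℝ≥0∞ => a ^ 2) := fun a b h => pow_le_pow_left' h 2
  have h1 : x + y + z ≤ 3 * (x ⊔ y ⊔ z) := by
    rw [show (3 : ℝ≥0∞) * (x ⊔ y ⊔ z) = (x ⊔ y ⊔ z) + (x ⊔ y ⊔ z) + (x ⊔ y ⊔ z) by ring]
    gcongr
    · exact le_sup_of_le_left le_sup_left
    · exact le_sup_of_le_left le_sup_right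
    · exact le_sup_right
  have h2 : (x ⊔ y ⊔ z) ^ 2 ≤ x ^ 2 + y ^ 2 + z ^ 2 := by
    have : (x ⊔ y ⊔ z) ^ 2 = x ^ 2 ⊔ y ^ 2 ⊔ z ^ 2 := by
      rw [hmono.map_sup, hmono.map_sup]
    rw [this]
    exact sup_le (sup_le (le_self_add.trans le_self_add) (le_add_self.trans le_self_add))
      le_add_self
  calc (x + y + z) ^ 2 ≤ (3 * (x ⊔ y ⊔ z)) ^ 2 := pow_le_pow_left' h1 2
    _ = 9 * (x ⊔ y ⊔ z) ^ 2 := by rw [mul_pow]; norm_num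
    _ ≤ 9 * (x ^ 2 + y ^ 2 + z ^ 2) := mul_le_mul_right h2 9

lemma norm_le_weight {k : E2} {s : ℝ} (hs : 1 < s) : ‖k‖ ≤ (1 + ‖k‖) ^ s := by
  have h0 : (0:ℝ) ≤ ‖k‖ := norm_nonneg k
  calc ‖k‖ ≤ 1 + ‖k‖ := by linarith
    _ = (1 + ‖k‖) ^ (1:ℝ) := (Real.rpow_one _).symm
    _ ≤ (1 + ‖k‖) ^ s := Real.rpow_le_rpow_of_exponent_le (by linarith) hs.le

lemma wt_sq (k : E2) (s : ℝ) :
    ENNReal.ofReal ((1 + ‖k‖) ^ s) ^ 2 = ENNReal.ofReal ((1 + ‖k‖) ^ (2 * s)) := by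
  have h0 : (0:ℝ) ≤ 1 + ‖k‖ := by positivity
  rw [← ENNReal.ofReal_pow (Real.rpow_nonneg h0 _), ← Real.rpow_natCast ((1 + ‖k‖) ^ s) 2,
    ← Real.rpow_mul h0]
  congr 2
  push_cast
  ring

lemma meas_wt (c : ℝ) : Measurable fun k : E2 => ENNReal.ofReal ((1 + ‖k‖) ^ c) := by
  apply Measurable.ennreal_ofReal
  exact (((continuous_const.fun_add continuous_norm).rpow_const
    (fun k => Or.inl (by positivity))).measurable)

/-- The key per-function facts. -/
lemma weighted_facts (s : ℝ) (hs : 1 < s) (B : E2 → ℂ)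
    (hB : AEStronglyMeasurable B volume)
    (hI : Integrable (fun k => (1 + ‖k‖) ^ (2 * s) * ‖B k‖ ^ 2) volume) :
    ∃ f : E2 → ℝ≥0∞, ∃ L : ℝ≥0∞, Measurable f ∧
      ((fun k => (‖B k‖₊ : ℝ≥0∞)) =ᵐ[volume] f) ∧
      L ≠ ∞ ∧
      ENNReal.ofReal (Real.sqrt (∫ k, (1 + ‖k‖) ^ (2 * s) * ‖B k‖ ^ 2)) = L ^ (2⁻¹ : ℝ) ∧
      (∫⁻ k, ((‖k‖₊ : ℝ≥0∞) * f k) ^ 2) ≤ L ∧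
      (∫⁻ k, f k) ≤
        (∫⁻ k : E2, ENNReal.ofReal ((1 + ‖k‖) ^ (-s)) ^ 2) ^ (2⁻¹ : ℝ) * L ^ (2⁻¹ : ℝ) := by
  have hBn : AEMeasurable (fun k => (‖B k‖₊ : ℝ≥0∞)) (volume : Measure E2) := hB.enorm
  refine ⟨hBn.mk _, ∫⁻ k, ENNReal.ofReal ((1 + ‖k‖) ^ (2 * s) * ‖B k‖ ^ 2),
    hBn.measurable_mk, hBn.ae_eq_mk, ?_, ?_, ?_, ?_⟩
  case _ =>
    -- finiteness
    have h1 : ∀ k : E2, ENNReal.ofReal ((1 + ‖k‖) ^ (2 * s) * ‖B k‖ ^ 2) ≤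
        (‖(1 + ‖k‖) ^ (2 * s) * ‖B k‖ ^ 2‖₊ : ℝ≥0∞) := fun k => Real.ofReal_le_enorm _
    exact ne_of_lt (lt_of_le_of_lt (lintegral_mono h1) hI.hasFiniteIntegral)
  case _ =>
    -- sqrt equality
    have hnn : ∀ k : E2, 0 ≤ (1 + ‖k‖) ^ (2 * s) * ‖B k‖ ^ 2 := by
      intro k
      have := Real.rpow_nonneg (by positivity : (0:ℝ) ≤ 1 + ‖k‖) (2 * s)
      positivity
    have hfin : (∫⁻ k, ENNReal.ofReal ((1 + ‖k‖) ^ (2 * s) * ‖B k‖ ^ 2)) ≠ ∞ := by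
      have h1 : ∀ k : E2, ENNReal.ofReal ((1 + ‖k‖) ^ (2 * s) * ‖B k‖ ^ 2) ≤
          (‖(1 + ‖k‖) ^ (2 * s) * ‖B k‖ ^ 2‖₊ : ℝ≥0∞) := fun k => Real.ofReal_le_enorm _
      exact ne_of_lt (lt_of_le_of_lt (lintegral_mono h1) hI.hasFiniteIntegral)
    rw [integral_eq_lintegral_of_nonneg_ae (ae_of_all _ hnn) hI.1, Real.sqrt_eq_rpow,
      show (1/2 : ℝ) = 2⁻¹ by norm_num,
      ← ENNReal.ofReal_rpow_of_nonneg ENNReal.toReal_nonneg (by norm_num),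
      ENNReal.ofReal_toReal hfin]
  case _ =>
    -- weighted square bound
    have hcongr : (∫⁻ k, ((‖k‖₊ : ℝ≥0∞) * hBn.mk _ k) ^ 2) =
        ∫⁻ k, ((‖k‖₊ : ℝ≥0∞) * (‖B k‖₊ : ℝ≥0∞)) ^ 2 := by
      refine lintegral_congr_ae ?_
      filter_upwards [hBn.ae_eq_mk] with k hk
      rw [hk]
    rw [hcongr]
    refine lintegral_mono fun k => ?_
    have h1 : ((‖k‖₊ : ℝ≥0∞) * (‖B k‖₊ : ℝ≥0∞)) ^ 2 ≤
        (ENNReal.ofReal ((1 + ‖k‖) ^ s) * (‖B k‖₊ : ℝ≥0∞)) ^ 2 := by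
      gcongr
      rw [← enorm_eq_nnnorm, ← ofReal_norm]
      exact ENNReal.ofReal_le_ofReal (norm_le_weight hs)
    refine h1.trans (le_of_eq ?_)
    rw [mul_pow, wt_sq, ← enorm_eq_nnnorm, ← ofReal_norm,
      ← ENNReal.ofReal_pow (norm_nonneg _), ← ENNReal.ofReal_mul (Real.rpow_nonneg (by positivity) _)]
  case _ =>
    -- L¹ bound by Cauchy–Schwarz
    have hcongr : (∫⁻ k, hBn.mk _ k) = ∫⁻ k, (‖B k‖₊ : ℝ≥0∞) := by
      refine lintegral_congr_ae ?_
      filter_upwards [hBn.ae_eq_mk] with k hk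
      rw [hk]
    rw [hcongr]
    have hpt : ∀ k : E2, (‖B k‖₊ : ℝ≥0∞) =
        ENNReal.ofReal ((1 + ‖k‖) ^ (-s)) *
          (ENNReal.ofReal ((1 + ‖k‖) ^ s) * (‖B k‖₊ : ℝ≥0∞)) := by
      intro k
      have h0 : (0:ℝ) < 1 + ‖k‖ := by positivity
      rw [← mul_assoc, ← ENNReal.ofReal_mul (Real.rpow_nonneg h0.le _),
        ← Real.rpow_add h0]
      simp
    rw [lintegral_congr hpt]
    have hu : AEMeasurable (fun k : E2 => ENNReal.ofReal ((1 + ‖k‖) ^ (-s)))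
        (volume : Measure E2) := (meas_wt (-s)).aemeasurable
    have hv : AEMeasurable
        (fun k : E2 => ENNReal.ofReal ((1 + ‖k‖) ^ s) * (‖B k‖₊ : ℝ≥0∞))
        (volume : Measure E2) := by
      exact AEMeasurable.mul (meas_wt s).aemeasurable hBn
    refine (lintegral_cs hu hv).trans (le_of_eq ?_)
    have heq : (∫⁻ k, (ENNReal.ofReal ((1 + ‖k‖) ^ s) * (‖B k‖₊ : ℝ≥0∞)) ^ 2) =
        ∫⁻ k, ENNReal.ofReal ((1 + ‖k‖) ^ (2 * s) * ‖B k‖ ^ 2) :=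
      lintegral_congr fun k => by
        rw [mul_pow, wt_sq, ← enorm_eq_nnnorm, ← ofReal_norm, ← ENNReal.ofReal_pow (norm_nonneg _),
          ← ENNReal.ofReal_mul (Real.rpow_nonneg (by positivity) _)]
    rw [heq]

end

end W2Aux


set_option maxHeartbeats 1000000 in
/-- Estimate of the `W₂` term: if `ℬ : (ℝ²)⁴ → ℂ` is Lipschitz and
`B̂_α, B̂_β, B̂_γ ∈ L²_s(ℝ²)`, `s > 1`, then the double-convolution term with the Lipschitz
increment of `ℬ` satisfies `‖W₂‖_{L²} ≤ c ε ‖B̂_α‖_{L²_s} ‖B̂_β‖_{L²_s} ‖B̂_γ‖_{L²_s}`. -/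
theorem W2_lipschitz_convolution_estimate
    (s : ℝ) (hs : 1 < s) (CB : NNReal)
    (ℬ : (EuclideanSpace ℝ (Fin 2) × EuclideanSpace ℝ (Fin 2) ×
          EuclideanSpace ℝ (Fin 2) × EuclideanSpace ℝ (Fin 2)) → ℂ)
    (hLip : LipschitzWith CB ℬ) :
    ∃ c > 0, ∀ (ε : ℝ), 0 < ε → ε < 1 →
      ∀ (a b d e : EuclideanSpace ℝ (Fin 2))
        (Bα Bβ Bγ : EuclideanSpace ℝ (Fin 2) → ℂ),
      AEStronglyMeasurable Bα volume → AEStronglyMeasurable Bβ volume →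
      AEStronglyMeasurable Bγ volume →
      Integrable (fun k => (1 + ‖k‖) ^ (2 * s) * ‖Bα k‖ ^ 2) volume →
      Integrable (fun k => (1 + ‖k‖) ^ (2 * s) * ‖Bβ k‖ ^ 2) volume →
      Integrable (fun k => (1 + ‖k‖) ^ (2 * s) * ‖Bγ k‖ ^ 2) volume →
      Real.sqrt (∫ k', ‖∫ l, ∫ t, Bα (k' - l) * Bβ (l - t) * star (Bγ t) *
          (ℬ (a + ε • k', b + ε • (k' - l), d + ε • (l - t), e + ε • t) -
            ℬ (a, b, d, e))‖ ^ 2) ≤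
        c * ε * Real.sqrt (∫ k, (1 + ‖k‖) ^ (2 * s) * ‖Bα k‖ ^ 2) *
          Real.sqrt (∫ k, (1 + ‖k‖) ^ (2 * s) * ‖Bβ k‖ ^ 2) *
          Real.sqrt (∫ k, (1 + ‖k‖) ^ (2 * s) * ‖Bγ k‖ ^ 2) := by
  classical
  set κ : ℝ≥0∞ := ∫⁻ k : W2Aux.E2, ENNReal.ofReal ((1 + ‖k‖) ^ (-s)) ^ 2 with hκdef
  have hκfin : κ ≠ ∞ := by
    have hpt : ∀ k : W2Aux.E2, ENNReal.ofReal ((1 + ‖k‖) ^ (-s)) ^ 2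
        = ENNReal.ofReal ((1 + ‖k‖) ^ (-(2 * s))) := by
      intro k
      have h0 : (0:ℝ) ≤ 1 + ‖k‖ := by positivity
      rw [← ENNReal.ofReal_pow (Real.rpow_nonneg h0 _),
        ← Real.rpow_natCast ((1 + ‖k‖) ^ (-s)) 2, ← Real.rpow_mul h0]
      norm_num
      ring_nf
    rw [hκdef, lintegral_congr hpt]
    refine ne_of_lt (finite_integral_one_add_norm ?_)
    rw [show Module.finrank ℝ W2Aux.E2 = 2 by simp]
    push_cast
    linarith
  refine ⟨6 * ((CB : ℝ) + 1) * (κ.toReal + 1), by positivity, ?_⟩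
  intro ε hε hε1 a b d e Bα Bβ Bγ hBα hBβ hBγ hIα hIβ hIγ
  obtain ⟨fα, Lα, hfαm, hfαe, hLαfin, hNα, hgαL, hfαL⟩ := W2Aux.weighted_facts s hs Bα hBα hIα
  obtain ⟨fβ, Lβ, hfβm, hfβe, hLβfin, hNβ, hgβL, hfβL⟩ := W2Aux.weighted_facts s hs Bβ hBβ hIβ
  obtain ⟨fγ, Lγ, hfγm, hfγe, hLγfin, hNγ, hgγL, hfγL⟩ := W2Aux.weighted_facts s hs Bγ hBγ hIγ
  rw [← hκdef] at hfαL hfβL hfγL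
  set w : W2Aux.E2 → ℝ≥0∞ := fun k => (‖k‖₊ : ℝ≥0∞) with hwdef
  have hwm : Measurable w := measurable_nnnorm.coe_nnreal_ennreal
  set gα : W2Aux.E2 → ℝ≥0∞ := fun k => w k * fα k with hgαdef
  set gβ : W2Aux.E2 → ℝ≥0∞ := fun k => w k * fβ k with hgβdef
  set gγ : W2Aux.E2 → ℝ≥0∞ := fun k => w k * fγ k with hgγdef
  have hgαm : Measurable gα := hwm.mul hfαm
  have hgβm : Measurable gβ := hwm.mul hfβm
  have hgγm : Measurable gγ := hwm.mul hfγm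
  set Cε : ℝ≥0∞ := (CB : ℝ≥0∞) * ENNReal.ofReal ε with hCdef
  have hCfin : Cε ≠ ∞ := ENNReal.mul_ne_top ENNReal.coe_ne_top ENNReal.ofReal_ne_top
  set Hbc : W2Aux.E2 → ℝ≥0∞ := fun l => ∫⁻ t, fβ (l - t) * fγ t with hHbcdef
  set H2 : W2Aux.E2 → ℝ≥0∞ := fun l => ∫⁻ t, gβ (l - t) * fγ t with hH2def
  set H3 : W2Aux.E2 → ℝ≥0∞ := fun l => ∫⁻ t, fβ (l - t) * gγ t with hH3def
  have hHbcm : Measurable Hbc := W2Aux.lconv_measurable hfβm hfγm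
  have hH2m : Measurable H2 := W2Aux.lconv_measurable hgβm hfγm
  have hH3m : Measurable H3 := W2Aux.lconv_measurable hfβm hgγm
  set S1 : W2Aux.E2 → ℝ≥0∞ := fun k => ∫⁻ l, gα (k - l) * Hbc l with hS1def
  set S2 : W2Aux.E2 → ℝ≥0∞ := fun k => ∫⁻ l, fα (k - l) * H2 l with hS2def
  set S3 : W2Aux.E2 → ℝ≥0∞ := fun k => ∫⁻ l, fα (k - l) * H3 l with hS3def
  have hS1m : Measurable S1 := W2Aux.lconv_measurable hgαm hHbcm
  have hS2m : Measurable S2 := W2Aux.lconv_measurable hfαm hH2m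
  have hS3m : Measurable S3 := W2Aux.lconv_measurable hfαm hH3m
  set T : W2Aux.E2 → ℝ≥0∞ := fun k' => ∫⁻ l, fα (k' - l) *
      ∫⁻ t, fβ (l - t) * fγ t * (w (k' - l) + w (l - t) + w t) with hTdef
  -- pointwise bound on the double Bochner integral
  have hG : ∀ k' : W2Aux.E2,
      (‖∫ l, ∫ t, Bα (k' - l) * Bβ (l - t) * star (Bγ t) *
        (ℬ (a + ε • k', b + ε • (k' - l), d + ε • (l - t), e + ε • t) -
          ℬ (a, b, d, e))‖₊ : ℝ≥0∞) ≤ Cε * T k' := by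
    intro k'
    have hterm : ∀ l t : W2Aux.E2,
        (‖Bα (k' - l) * Bβ (l - t) * star (Bγ t) *
          (ℬ (a + ε • k', b + ε • (k' - l), d + ε • (l - t), e + ε • t) -
            ℬ (a, b, d, e))‖₊ : ℝ≥0∞)
        ≤ (Cε * (‖Bα (k' - l)‖₊ : ℝ≥0∞)) *
          ((‖Bβ (l - t)‖₊ : ℝ≥0∞) * (‖Bγ t‖₊ : ℝ≥0∞) *
            (w (k' - l) + w (l - t) + w t)) := by
      intro l t
      have hΔ : (‖ℬ (a + ε • k', b + ε • (k' - l), d + ε • (l - t), e + ε • t) -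
          ℬ (a, b, d, e)‖₊ : ℝ≥0∞)
          ≤ (CB : ℝ≥0∞) * (ENNReal.ofReal ε * (w (k' - l) + w (l - t) + w t)) := by
        rw [← enorm_eq_nnnorm, ← edist_eq_enorm_sub]
        refine (hLip _ _).trans (mul_le_mul_right ?_ _)
        rw [Prod.edist_eq, Prod.edist_eq, Prod.edist_eq]
        have he : ∀ x v : W2Aux.E2, edist (x + ε • v) x = ENNReal.ofReal ε * w v := by
          intro x v
          rw [edist_eq_enorm_sub, add_sub_cancel_left, enorm_smul,
            Real.enorm_eq_ofReal hε.le, enorm_eq_nnnorm]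
        rw [he, he, he, he]
        have hk' : w k' ≤ w (k' - l) + w (l - t) + w t := by
          have h2 : ‖k'‖₊ ≤ ‖k' - l‖₊ + ‖l - t‖₊ + ‖t‖₊ := by
            calc ‖k'‖₊ = ‖(k' - l) + (l - t) + t‖₊ := by congr 1; abel
              _ ≤ ‖(k' - l) + (l - t)‖₊ + ‖t‖₊ := nnnorm_add_le _ _
              _ ≤ ‖k' - l‖₊ + ‖l - t‖₊ + ‖t‖₊ :=
                  add_le_add_left (nnnorm_add_le _ _) _
          calc w k' = ((‖k'‖₊ : NNReal) : ℝ≥0∞) := rfl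
            _ ≤ ((‖k' - l‖₊ + ‖l - t‖₊ + ‖t‖₊ : NNReal) : ℝ≥0∞) := ENNReal.coe_le_coe.mpr h2
            _ = w (k' - l) + w (l - t) + w t := by push_cast; rfl
        refine sup_le (mul_le_mul_right hk' _)
          (sup_le (mul_le_mul_right (le_self_add.trans le_self_add) _)
            (sup_le (mul_le_mul_right (le_add_self.trans le_self_add) _)
              (mul_le_mul_right le_add_self _)))
      calc (‖Bα (k' - l) * Bβ (l - t) * star (Bγ t) *
            (ℬ (a + ε • k', b + ε • (k' - l), d + ε • (l - t), e + ε • t) -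
              ℬ (a, b, d, e))‖₊ : ℝ≥0∞)
          = (‖Bα (k' - l)‖₊ : ℝ≥0∞) * (‖Bβ (l - t)‖₊ : ℝ≥0∞) * (‖Bγ t‖₊ : ℝ≥0∞) *
            (‖ℬ (a + ε • k', b + ε • (k' - l), d + ε • (l - t), e + ε • t) -
              ℬ (a, b, d, e)‖₊ : ℝ≥0∞) := by
            rw [nnnorm_mul, nnnorm_mul, nnnorm_mul, nnnorm_star]
            push_cast
            ring
        _ ≤ (‖Bα (k' - l)‖₊ : ℝ≥0∞) * (‖Bβ (l - t)‖₊ : ℝ≥0∞) * (‖Bγ t‖₊ : ℝ≥0∞) *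
            ((CB : ℝ≥0∞) * (ENNReal.ofReal ε * (w (k' - l) + w (l - t) + w t))) :=
            mul_le_mul_right hΔ _
        _ = (Cε * (‖Bα (k' - l)‖₊ : ℝ≥0∞)) *
            ((‖Bβ (l - t)‖₊ : ℝ≥0∞) * (‖Bγ t‖₊ : ℝ≥0∞) *
              (w (k' - l) + w (l - t) + w t)) := by
            rw [hCdef]; ring
    have hT'eq : (∫⁻ l, (‖Bα (k' - l)‖₊ : ℝ≥0∞) *
        ∫⁻ t, (‖Bβ (l - t)‖₊ : ℝ≥0∞) * (‖Bγ t‖₊ : ℝ≥0∞) *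
          (w (k' - l) + w (l - t) + w t)) = T k' := by
      simp only [hTdef]
      have hin : ∀ l : W2Aux.E2, (∫⁻ t, (‖Bβ (l - t)‖₊ : ℝ≥0∞) * (‖Bγ t‖₊ : ℝ≥0∞) *
          (w (k' - l) + w (l - t) + w t))
          = ∫⁻ t, fβ (l - t) * fγ t * (w (k' - l) + w (l - t) + w t) := by
        intro l
        refine lintegral_congr_ae ?_
        have h1 := (Measure.measurePreserving_sub_left (volume : Measure W2Aux.E2)
          l).quasiMeasurePreserving.ae_eq_comp hfβe
        simp only [Function.comp_def] at h1
        filter_upwards [h1, hfγe] with t h1t h2t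
        rw [h1t, h2t]
      refine lintegral_congr_ae ?_
      have h2 := (Measure.measurePreserving_sub_left (volume : Measure W2Aux.E2)
        k').quasiMeasurePreserving.ae_eq_comp hfαe
      simp only [Function.comp_def] at h2
      filter_upwards [h2] with l h2l
      rw [hin l, h2l]
    calc (‖∫ l, ∫ t, Bα (k' - l) * Bβ (l - t) * star (Bγ t) *
          (ℬ (a + ε • k', b + ε • (k' - l), d + ε • (l - t), e + ε • t) -
            ℬ (a, b, d, e))‖₊ : ℝ≥0∞)
        ≤ ∫⁻ l, (‖∫ t, Bα (k' - l) * Bβ (l - t) * star (Bγ t) *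
          (ℬ (a + ε • k', b + ε • (k' - l), d + ε • (l - t), e + ε • t) -
            ℬ (a, b, d, e))‖₊ : ℝ≥0∞) := enorm_integral_le_lintegral_enorm _
      _ ≤ ∫⁻ l, Cε * ((‖Bα (k' - l)‖₊ : ℝ≥0∞) *
          ∫⁻ t, (‖Bβ (l - t)‖₊ : ℝ≥0∞) * (‖Bγ t‖₊ : ℝ≥0∞) *
            (w (k' - l) + w (l - t) + w t)) := by
          refine lintegral_mono fun l => ?_
          calc (‖∫ t, Bα (k' - l) * Bβ (l - t) * star (Bγ t) *
                (ℬ (a + ε • k', b + ε • (k' - l), d + ε • (l - t), e + ε • t) -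
                  ℬ (a, b, d, e))‖₊ : ℝ≥0∞)
              ≤ ∫⁻ t, (‖Bα (k' - l) * Bβ (l - t) * star (Bγ t) *
                (ℬ (a + ε • k', b + ε • (k' - l), d + ε • (l - t), e + ε • t) -
                  ℬ (a, b, d, e))‖₊ : ℝ≥0∞) := enorm_integral_le_lintegral_enorm _
            _ ≤ ∫⁻ t, (Cε * (‖Bα (k' - l)‖₊ : ℝ≥0∞)) *
                ((‖Bβ (l - t)‖₊ : ℝ≥0∞) * (‖Bγ t‖₊ : ℝ≥0∞) *
                  (w (k' - l) + w (l - t) + w t)) := lintegral_mono (hterm l)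
            _ = (Cε * (‖Bα (k' - l)‖₊ : ℝ≥0∞)) *
                ∫⁻ t, (‖Bβ (l - t)‖₊ : ℝ≥0∞) * (‖Bγ t‖₊ : ℝ≥0∞) *
                  (w (k' - l) + w (l - t) + w t) :=
                lintegral_const_mul' _ _ (ENNReal.mul_ne_top hCfin ENNReal.coe_ne_top)
            _ = Cε * ((‖Bα (k' - l)‖₊ : ℝ≥0∞) *
                ∫⁻ t, (‖Bβ (l - t)‖₊ : ℝ≥0∞) * (‖Bγ t‖₊ : ℝ≥0∞) *
                  (w (k' - l) + w (l - t) + w t)) := by ring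
      _ = Cε * ∫⁻ l, (‖Bα (k' - l)‖₊ : ℝ≥0∞) *
          ∫⁻ t, (‖Bβ (l - t)‖₊ : ℝ≥0∞) * (‖Bγ t‖₊ : ℝ≥0∞) *
            (w (k' - l) + w (l - t) + w t) := lintegral_const_mul' _ _ hCfin
      _ = Cε * T k' := by rw [hT'eq]
  -- split T into the three convolution terms
  have hsplit : ∀ k' : W2Aux.E2, T k' = S1 k' + S2 k' + S3 k' := by
    intro k'
    simp only [hTdef, hS1def, hS2def, hS3def]
    have hin : ∀ l : W2Aux.E2, (∫⁻ t, fβ (l - t) * fγ t * (w (k' - l) + w (l - t) + w t))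
        = w (k' - l) * Hbc l + H2 l + H3 l := by
      intro l
      have hpt : ∀ t, fβ (l - t) * fγ t * (w (k' - l) + w (l - t) + w t)
          = w (k' - l) * (fβ (l - t) * fγ t) + (w (l - t) * fβ (l - t)) * fγ t
            + fβ (l - t) * (w t * fγ t) := fun t => by ring
      rw [lintegral_congr hpt]
      have hm1 : Measurable fun t : W2Aux.E2 => w (k' - l) * (fβ (l - t) * fγ t) :=
        ((hfβm.comp (measurable_const.sub measurable_id)).mul hfγm).const_mul _
      have hm2 : Measurable fun t : W2Aux.E2 => (w (l - t) * fβ (l - t)) * fγ t :=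
        (((hwm.comp (measurable_const.sub measurable_id)).mul
          (hfβm.comp (measurable_const.sub measurable_id))).mul hfγm)
      have hmbc : Measurable fun t : W2Aux.E2 => fβ (l - t) * fγ t := by
        exact (hfβm.comp (measurable_const.sub measurable_id)).mul hfγm
      rw [lintegral_add_left (hm1.fun_add hm2), lintegral_add_left hm1]
      try simp only [hHbcdef, hH2def, hH3def, hgβdef, hgγdef]
      try rw [lintegral_const_mul _ hmbc]
    have hstep : (∫⁻ l, fα (k' - l) *
        ∫⁻ t, fβ (l - t) * fγ t * (w (k' - l) + w (l - t) + w t))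
        = ∫⁻ l, fα (k' - l) * (w (k' - l) * Hbc l + H2 l + H3 l) :=
      lintegral_congr fun l => by rw [hin l]
    rw [hstep]
    have hpt2 : ∀ l, fα (k' - l) * (w (k' - l) * Hbc l + H2 l + H3 l)
        = gα (k' - l) * Hbc l + fα (k' - l) * H2 l + fα (k' - l) * H3 l := by
      intro l
      simp only [hgαdef]
      ring
    rw [lintegral_congr hpt2]
    have hma : Measurable fun l : W2Aux.E2 => gα (k' - l) * Hbc l :=
      (hgαm.comp (measurable_const.sub measurable_id)).mul hHbcm
    have hmb : Measurable fun l : W2Aux.E2 => fα (k' - l) * H2 l :=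
      (hfαm.comp (measurable_const.sub measurable_id)).mul hH2m
    rw [lintegral_add_left (hma.fun_add hmb), lintegral_add_left hma]
    try rfl
  -- the three L² bounds
  have hE1 : (∫⁻ k, S1 k ^ 2) ≤ κ ^ 2 * (Lα * (Lβ * Lγ)) := by
    calc (∫⁻ k, S1 k ^ 2) ≤ (∫⁻ k, gα k ^ 2) * (∫⁻ k, Hbc k) ^ 2 :=
        W2Aux.lconv_sq_le hgαm hHbcm
      _ = (∫⁻ k, gα k ^ 2) * ((∫⁻ k, fβ k) * (∫⁻ k, fγ k)) ^ 2 := by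
          have hHbc1 : (∫⁻ k, Hbc k) = (∫⁻ k, fβ k) * ∫⁻ k, fγ k := by
            simp only [hHbcdef]
            exact W2Aux.lconv_l1 hfβm hfγm
          rw [hHbc1]
      _ ≤ Lα * ((κ ^ (2⁻¹ : ℝ) * Lβ ^ (2⁻¹ : ℝ)) * (κ ^ (2⁻¹ : ℝ) * Lγ ^ (2⁻¹ : ℝ))) ^ 2 :=
          mul_le_mul' hgαL (pow_le_pow_left' (mul_le_mul' hfβL hfγL) 2)
      _ = κ ^ 2 * (Lα * (Lβ * Lγ)) := by
          simp only [mul_pow, W2Aux.sq_half]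
          ring
  have hE2 : (∫⁻ k, S2 k ^ 2) ≤ κ ^ 2 * (Lα * (Lβ * Lγ)) := by
    calc (∫⁻ k, S2 k ^ 2) ≤ (∫⁻ k, fα k) ^ 2 * (∫⁻ k, H2 k ^ 2) :=
        W2Aux.lconv_sq_le' hfαm hH2m
      _ ≤ (κ ^ (2⁻¹ : ℝ) * Lα ^ (2⁻¹ : ℝ)) ^ 2 * ((∫⁻ k, gβ k ^ 2) * (∫⁻ k, fγ k) ^ 2) :=
          mul_le_mul' (pow_le_pow_left' hfαL 2) (W2Aux.lconv_sq_le hgβm hfγm)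
      _ ≤ (κ ^ (2⁻¹ : ℝ) * Lα ^ (2⁻¹ : ℝ)) ^ 2 * (Lβ * (κ ^ (2⁻¹ : ℝ) * Lγ ^ (2⁻¹ : ℝ)) ^ 2) :=
          mul_le_mul_right (mul_le_mul' hgβL (pow_le_pow_left' hfγL 2)) _
      _ = κ ^ 2 * (Lα * (Lβ * Lγ)) := by
          simp only [mul_pow, W2Aux.sq_half]
          ring
  have hE3 : (∫⁻ k, S3 k ^ 2) ≤ κ ^ 2 * (Lα * (Lβ * Lγ)) := by
    calc (∫⁻ k, S3 k ^ 2) ≤ (∫⁻ k, fα k) ^ 2 * (∫⁻ k, H3 k ^ 2) :=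
        W2Aux.lconv_sq_le' hfαm hH3m
      _ ≤ (κ ^ (2⁻¹ : ℝ) * Lα ^ (2⁻¹ : ℝ)) ^ 2 * ((∫⁻ k, fβ k) ^ 2 * (∫⁻ k, gγ k ^ 2)) :=
          mul_le_mul' (pow_le_pow_left' hfαL 2) (W2Aux.lconv_sq_le' hfβm hgγm)
      _ ≤ (κ ^ (2⁻¹ : ℝ) * Lα ^ (2⁻¹ : ℝ)) ^ 2 * ((κ ^ (2⁻¹ : ℝ) * Lβ ^ (2⁻¹ : ℝ)) ^ 2 * Lγ) :=
          mul_le_mul_right (mul_le_mul' (pow_le_pow_left' hfβL 2) hgγL) _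
      _ = κ ^ 2 * (Lα * (Lβ * Lγ)) := by
          simp only [mul_pow, W2Aux.sq_half]
          ring
  -- nonnegativity facts for the real side
  have hc0 : (0:ℝ) ≤ 6 * ((CB : ℝ) + 1) * (κ.toReal + 1) := by positivity
  have hM0 : 0 ≤ 6 * ((CB : ℝ) + 1) * (κ.toReal + 1) * ε *
      Real.sqrt (∫ k, (1 + ‖k‖) ^ (2 * s) * ‖Bα k‖ ^ 2) *
      Real.sqrt (∫ k, (1 + ‖k‖) ^ (2 * s) * ‖Bβ k‖ ^ 2) *
      Real.sqrt (∫ k, (1 + ‖k‖) ^ (2 * s) * ‖Bγ k‖ ^ 2) :=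
    mul_nonneg (mul_nonneg (mul_nonneg (mul_nonneg hc0 hε.le) (Real.sqrt_nonneg _))
      (Real.sqrt_nonneg _)) (Real.sqrt_nonneg _)
  refine W2Aux.sqrt_integral_le (fun k' => by positivity) hM0 ?_
  -- rewrite the RHS
  have hRHS : ENNReal.ofReal ((6 * ((CB : ℝ) + 1) * (κ.toReal + 1) * ε *
      Real.sqrt (∫ k, (1 + ‖k‖) ^ (2 * s) * ‖Bα k‖ ^ 2) *
      Real.sqrt (∫ k, (1 + ‖k‖) ^ (2 * s) * ‖Bβ k‖ ^ 2) *
      Real.sqrt (∫ k, (1 + ‖k‖) ^ (2 * s) * ‖Bγ k‖ ^ 2)) ^ 2)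
      = (ENNReal.ofReal (6 * ((CB : ℝ) + 1) * (κ.toReal + 1)) ^ 2 *
          ENNReal.ofReal ε ^ 2) * (Lα * (Lβ * Lγ)) := by
    rw [ENNReal.ofReal_pow hM0,
      ENNReal.ofReal_mul (mul_nonneg (mul_nonneg (mul_nonneg hc0 hε.le)
        (Real.sqrt_nonneg _)) (Real.sqrt_nonneg _)),
      ENNReal.ofReal_mul (mul_nonneg (mul_nonneg hc0 hε.le) (Real.sqrt_nonneg _)),
      ENNReal.ofReal_mul (mul_nonneg hc0 hε.le),
      ENNReal.ofReal_mul hc0, hNα, hNβ, hNγ]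
    simp only [mul_pow, W2Aux.sq_half]
    ring
  rw [hRHS]
  -- the main chain
  calc (∫⁻ k', ENNReal.ofReal (‖∫ l, ∫ t, Bα (k' - l) * Bβ (l - t) * star (Bγ t) *
        (ℬ (a + ε • k', b + ε • (k' - l), d + ε • (l - t), e + ε • t) -
          ℬ (a, b, d, e))‖ ^ 2))
      ≤ ∫⁻ k', (Cε * T k') ^ 2 := by
        refine lintegral_mono fun k' => ?_
        rw [ENNReal.ofReal_pow (norm_nonneg _), ofReal_norm, enorm_eq_nnnorm]
        exact pow_le_pow_left' (hG k') 2
    _ = Cε ^ 2 * ∫⁻ k', T k' ^ 2 := by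
        rw [← lintegral_const_mul' _ _ (ENNReal.pow_ne_top hCfin)]
        exact lintegral_congr fun k' => mul_pow _ _ 2
    _ ≤ Cε ^ 2 * (9 * ((∫⁻ k, S1 k ^ 2) + (∫⁻ k, S2 k ^ 2) + (∫⁻ k, S3 k ^ 2))) := by
        refine mul_le_mul_right ?_ _
        calc (∫⁻ k', T k' ^ 2) ≤ ∫⁻ k', 9 * (S1 k' ^ 2 + S2 k' ^ 2 + S3 k' ^ 2) :=
            lintegral_mono fun k' => by rw [hsplit k']; exact W2Aux.sum_sq_le _ _ _
          _ = 9 * ∫⁻ k', (S1 k' ^ 2 + S2 k' ^ 2 + S3 k' ^ 2) :=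
            lintegral_const_mul' _ _ (by norm_num)
          _ = 9 * ((∫⁻ k, S1 k ^ 2) + (∫⁻ k, S2 k ^ 2) + (∫⁻ k, S3 k ^ 2)) := by
            rw [lintegral_add_left ((hS1m.pow_const 2).fun_add (hS2m.pow_const 2)),
              lintegral_add_left (hS1m.pow_const 2)]
    _ ≤ Cε ^ 2 * (9 * (κ ^ 2 * (Lα * (Lβ * Lγ)) + κ ^ 2 * (Lα * (Lβ * Lγ)) +
          κ ^ 2 * (Lα * (Lβ * Lγ)))) := by
        gcongr
    _ = (Cε ^ 2 * κ ^ 2 * 27) * (Lα * (Lβ * Lγ)) := by ring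
    _ ≤ (ENNReal.ofReal (6 * ((CB : ℝ) + 1) * (κ.toReal + 1)) ^ 2 *
          ENNReal.ofReal ε ^ 2) * (Lα * (Lβ * Lγ)) := by
        refine mul_le_mul_left ?_ _
        have hoc : ENNReal.ofReal (6 * ((CB : ℝ) + 1) * (κ.toReal + 1))
            = 6 * ((CB : ℝ≥0∞) + 1) * (κ + 1) := by
          rw [ENNReal.ofReal_mul (by positivity), ENNReal.ofReal_mul (by norm_num : (0:ℝ) ≤ 6)]
          congr 1
          · congr 1
            · norm_num
            · rw [ENNReal.ofReal_add (NNReal.coe_nonneg CB) zero_le_one,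
                ENNReal.ofReal_coe_nnreal, ENNReal.ofReal_one]
          · rw [ENNReal.ofReal_add ENNReal.toReal_nonneg zero_le_one,
              ENNReal.ofReal_toReal hκfin, ENNReal.ofReal_one]
        rw [hoc, hCdef]
        calc ((CB : ℝ≥0∞) * ENNReal.ofReal ε) ^ 2 * κ ^ 2 * 27
            = (27 * ((CB : ℝ≥0∞) ^ 2 * κ ^ 2)) * ENNReal.ofReal ε ^ 2 := by ring
          _ ≤ (36 * (((CB : ℝ≥0∞) + 1) ^ 2 * (κ + 1) ^ 2)) * ENNReal.ofReal ε ^ 2 := by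
              gcongr
              · norm_num
              · exact le_self_add
              · exact le_self_add
          _ = (6 * ((CB : ℝ≥0∞) + 1) * (κ + 1)) ^ 2 * ENNReal.ofReal ε ^ 2 := by
              rw [mul_pow, mul_pow, show ((6:ℝ≥0∞)) ^ 2 = 36 by norm_num]
              ring
end
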